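/- For every weighted r-graph (F,μ) there exists a sequence {F_n} of blowups of F such that v(F_n) → ∞, lim_{n→∞} |F_n|/v(F_n)^r = λ(F,μ), and for every clonable family 𝔥 of r-graphs, lim_{n→∞} d_𝔥(F_n)/v(F_n)^r = d^w_𝔥(F,μ). -/

import Mathlib

open Filter

namespace TuranGT

/-- An `r`-graph: an `r`-uniform hypergraph with vertex set `{0, ..., n-1} ⊆ ℕ`. -/
structure RGraph (r : ℕ) where
  n : ℕ
  edges : Finset (Finset ℕ)
  uniform : ∀ e ∈ edges, e.card = r
  valid : ∀ e ∈ edges, ∀ v ∈ e, v < n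

variable {r : ℕ}

/-- The link of a vertex `v`: the set of `(r-1)`-sets `I` with `I ∪ {v}` an edge. -/
def link (F : RGraph r) (v : ℕ) : Finset (Finset ℕ) :=
  (F.edges.filter fun e => v ∈ e).image fun e => e.erase v

/-- `G` contains a copy of `H` as a subgraph. -/
def ContainsCopy (G H : RGraph r) : Prop :=
  ∃ f : ℕ → ℕ, Set.InjOn f (Set.Iio H.n) ∧ (∀ v < H.n, f v < G.n) ∧
    ∀ e ∈ H.edges, e.image f ∈ G.edges

/-- `G` is `𝔉`-free: it contains no member of `𝔉` as a subgraph. -/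
def FreeFam (𝔉 : Set (RGraph r)) (G : RGraph r) : Prop :=
  ∀ H ∈ 𝔉, ¬ ContainsCopy G H

/-- The Turán number `ex(n, 𝔉)`. -/
noncomputable def exNum (r n : ℕ) (𝔉 : Set (RGraph r)) : ℕ :=
  sSup {k | ∃ G : RGraph r, G.n = n ∧ FreeFam 𝔉 G ∧ G.edges.card = k}

/-- `φ` witnesses that `G` is a blowup of `F`: fibers of `φ` form a blowup partition. -/
def IsBlowupMap (F G : RGraph r) (φ : ℕ → ℕ) : Prop :=
  (∀ v < G.n, φ v < F.n) ∧
    ∀ e : Finset ℕ, e ∈ G.edges ↔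
      ((∀ v ∈ e, v < G.n) ∧ Set.InjOn φ (e : Set ℕ) ∧ e.image φ ∈ F.edges)

/-- `G` is (isomorphic to) a blowup of `F` (cloning and deleting vertices). -/
def IsBlowup (F G : RGraph r) : Prop := ∃ φ : ℕ → ℕ, IsBlowupMap F G φ

/-- The family `𝔅(S)` of all blowups of `S`. -/
def blowupFam (S : RGraph r) : Set (RGraph r) := {G | IsBlowup S G}

/-- A family is clonable if it is closed under taking blowups. -/
def Clonable (𝔉 : Set (RGraph r)) : Prop :=
  ∀ F ∈ 𝔉, ∀ G : RGraph r, IsBlowup F G → G ∈ 𝔉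

/-- `m(𝔉, n)`: maximum number of edges of an `n`-vertex member of `𝔉`. -/
noncomputable def mFam (𝔉 : Set (RGraph r)) (n : ℕ) : ℕ :=
  sSup {k | ∃ F ∈ 𝔉, F.n = n ∧ F.edges.card = k}

/-- `m(𝔉) = lim_{n → ∞} m(𝔉, n)/n^r` (when the family is smooth). -/
noncomputable def mDen (𝔉 : Set (RGraph r)) : ℝ :=
  limUnder atTop fun n : ℕ => (mFam 𝔉 n : ℝ) / (n : ℝ) ^ r

/-- The edit distance `d_𝔥(F)` from `F` to the family `𝔥`. -/
noncomputable def distFam (𝔥 : Set (RGraph r)) (F : RGraph r) : ℝ :=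
  sInf {x : ℝ | ∃ H ∈ 𝔥, H.n = F.n ∧ x = ((symmDiff F.edges H.edges).card : ℝ)}

/-- `μ` is a probability distribution on the vertex set of `F`. -/
def IsWeight (F : RGraph r) (μ : ℕ → ℝ) : Prop :=
  (∀ v, 0 ≤ μ v) ∧ (∀ v, F.n ≤ v → μ v = 0) ∧ ∑ v ∈ Finset.range F.n, μ v = 1

/-- Weighted density `λ(F, μ)`. -/
noncomputable def lamW (F : RGraph r) (μ : ℕ → ℝ) : ℝ :=
  ∑ e ∈ F.edges, ∏ v ∈ e, μ v

/-- The Lagrangian `λ(F)`. -/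
noncomputable def lagrangian (F : RGraph r) : ℝ :=
  sSup {x : ℝ | ∃ μ, IsWeight F μ ∧ x = lamW F μ}

/-- `λ(𝔥)` for a family of r-graphs. -/
noncomputable def lamFam (𝔥 : Set (RGraph r)) : ℝ :=
  sSup {x : ℝ | ∃ H ∈ 𝔥, ∃ μ, IsWeight H μ ∧ x = lamW H μ}

/-- The uniform distribution `ξ_F`. -/
noncomputable def uniformW (F : RGraph r) : ℕ → ℝ :=
  fun v => if v < F.n then ((F.n : ℝ))⁻¹ else 0

/-- `(G, ν)` is a blowup of the weighted graph `(F, μ)`. -/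
def WIsBlowup (F : RGraph r) (μ : ℕ → ℝ) (G : RGraph r) (ν : ℕ → ℝ) : Prop :=
  IsWeight G ν ∧ ∃ φ : ℕ → ℕ, IsBlowupMap F G φ ∧
    ∀ i < F.n, μ i = ∑ v ∈ (Finset.range G.n).filter (fun v => φ v = i), ν v

/-- `d'(F1, F2, μ)` for graphs on a common vertex set. -/
noncomputable def dPrime (E1 E2 : Finset (Finset ℕ)) (μ : ℕ → ℝ) : ℝ :=
  ∑ e ∈ symmDiff E1 E2, ∏ v ∈ e, μ v

/-- The distance between weighted `r`-graphs. -/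
noncomputable def wDist (F1 : RGraph r) (μ1 : ℕ → ℝ) (F2 : RGraph r) (μ2 : ℕ → ℝ) : ℝ :=
  sInf {x : ℝ | ∃ (G1 G2 : RGraph r) (ν : ℕ → ℝ), G1.n = G2.n ∧
    WIsBlowup F1 μ1 G1 ν ∧ WIsBlowup F2 μ2 G2 ν ∧ x = dPrime G1.edges G2.edges ν}

/-- The weighted distance `d^w_𝔥(F, μ)` from a weighted graph to a family. -/
noncomputable def wDistFam (𝔥 : Set (RGraph r)) (F : RGraph r) (μ : ℕ → ℝ) : ℝ :=
  sInf {x : ℝ | ∃ H ∈ 𝔥, ∃ ν, IsWeight H ν ∧ x = wDist F μ H ν}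

/-- `𝔉` is `(𝔥, ε, α)`-locally stable. -/
def LocallyStable (𝔉 𝔥 : Set (RGraph r)) (ε α : ℝ) : Prop :=
  ∃ n0 : ℕ, ∀ F ∈ 𝔉, n0 ≤ F.n → distFam 𝔥 F ≤ ε * (F.n : ℝ) ^ r →
    (F.edges.card : ℝ) ≤ (mFam 𝔥 F.n : ℝ) - α * distFam 𝔥 F

/-- `𝔉` is `𝔥`-locally stable. -/
def HLocallyStable (𝔉 𝔥 : Set (RGraph r)) : Prop :=
  ∃ ε > (0 : ℝ), ∃ α > (0 : ℝ), LocallyStable 𝔉 𝔥 ε α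

/-- `𝔉` is `𝔥`-stable, i.e. `(𝔥, 1, α)`-locally stable for some `α > 0`. -/
def HStable (𝔉 𝔥 : Set (RGraph r)) : Prop :=
  ∃ α > (0 : ℝ), LocallyStable 𝔉 𝔥 1 α

/-- `𝔉` is `(𝔥, ε, α)`-vertex locally stable. -/
def VertexLocallyStable (𝔉 𝔥 : Set (RGraph r)) (ε α : ℝ) : Prop :=
  ∃ n0 : ℕ, ∀ F ∈ 𝔉, n0 ≤ F.n → distFam 𝔥 F ≤ ε * (F.n : ℝ) ^ r →
    (∀ v < F.n, ((r : ℝ) * mDen 𝔥 - ε) * (F.n : ℝ) ^ (r - 1) ≤ ((link F v).card : ℝ)) →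
    (F.edges.card : ℝ) ≤ (mFam 𝔥 F.n : ℝ) - α * distFam 𝔥 F

/-- `𝔉` is `𝔥`-vertex locally stable. -/
def HVertexLocallyStable (𝔉 𝔥 : Set (RGraph r)) : Prop :=
  ∃ ε > (0 : ℝ), ∃ α > (0 : ℝ), VertexLocallyStable 𝔉 𝔥 ε α

/-- `𝔉` is `(𝔥, ε, α)`-weight locally stable. -/
def WeightLocallyStable (𝔉 𝔥 : Set (RGraph r)) (ε α : ℝ) : Prop :=
  ∀ F ∈ 𝔉, ∀ μ : ℕ → ℝ, IsWeight F μ → wDistFam 𝔥 F μ ≤ ε →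
    lamW F μ ≤ lamFam 𝔥 - α * wDistFam 𝔥 F μ

/-- `𝔉` is `𝔥`-weight locally stable. -/
def HWeightLocallyStable (𝔉 𝔥 : Set (RGraph r)) : Prop :=
  ∃ ε > (0 : ℝ), ∃ α > (0 : ℝ), WeightLocallyStable 𝔉 𝔥 ε α

/-- `𝔉` is `𝔥`-weight stable: `(𝔥, 1, α)`-weight locally stable for some `α > 0`. -/
def HWeightStable (𝔉 𝔥 : Set (RGraph r)) : Prop :=
  ∃ α > (0 : ℝ), WeightLocallyStable 𝔉 𝔥 1 α

/-- `𝔉` is `𝔥`-weakly weight stable. -/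
def WeaklyWeightStable (𝔉 𝔥 : Set (RGraph r)) : Prop :=
  ∀ ε > (0 : ℝ), ∃ δ > (0 : ℝ), ∀ F ∈ 𝔉, ∀ μ : ℕ → ℝ, IsWeight F μ →
    lamFam 𝔥 - δ ≤ lamW F μ → wDistFam 𝔥 F μ ≤ ε

/-- The generalized triangle `T_r` on vertex set `{0, ..., 2r-2}` (for `r ≥ 2`),
with edges `D1 = {0,...,r-1}`, `D2 = {0,...,r-2} ∪ {r}`, `D3 = {r-1, r, ..., 2r-2}`. -/
def genTriangle (r : ℕ) : RGraph r where
  n := 2 * r - 1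
  edges :=
    if _h : 2 ≤ r then
      {Finset.range r, insert r (Finset.range (r - 1)), Finset.Ico (r - 1) (2 * r - 1)}
    else ∅
  uniform := by
    intro e he
    split_ifs at he with h
    · simp only [Finset.mem_insert, Finset.mem_singleton] at he
      rcases he with rfl | rfl | rfl
      · exact Finset.card_range r
      · rw [Finset.card_insert_of_notMem (by simp only [Finset.mem_range]; omega),
          Finset.card_range]
        omega
      · rw [Nat.card_Ico]
        omega
    · simp at he
  valid := by
    intro e he v hv
    split_ifs at he with h
    · simp only [Finset.mem_insert, Finset.mem_singleton] at he
      rcases he with rfl | rfl | rfl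
      · simp only [Finset.mem_range] at hv; omega
      · simp only [Finset.mem_insert, Finset.mem_range] at hv; omega
      · simp only [Finset.mem_Ico] at hv; omega
    · simp at he

/-- The family `Σ_r`: all `r`-graphs with three edges `D1, D2, D3` such that
`|D1 ∩ D2| = r - 1` and `D1 △ D2 ⊆ D3`. -/
def SigmaFam (r : ℕ) : Set (RGraph r) :=
  {G | ∃ D1 D2 D3 : Finset ℕ, G.edges = {D1, D2, D3} ∧
    D1 ≠ D2 ∧ D1 ≠ D3 ∧ D2 ≠ D3 ∧
    (D1 ∩ D2).card = r - 1 ∧ symmDiff D1 D2 ⊆ D3}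

/-- The complete graph `K_t` as a `2`-graph. -/
def completeGraph (t : ℕ) : RGraph 2 where
  n := t
  edges := Finset.powersetCard 2 (Finset.range t)
  uniform := fun _e he => (Finset.mem_powersetCard.1 he).2
  valid := fun _e he v hv => Finset.mem_range.1 ((Finset.mem_powersetCard.1 he).1 hv)

/-- `S` is an `(m, r, r-1)` Steiner system: each `(r-1)`-subset of the vertex set
lies in exactly one edge. -/
def IsSteiner (m : ℕ) (S : RGraph r) : Prop :=
  S.n = m ∧ ∀ I : Finset ℕ, (∀ v ∈ I, v < S.n) → I.card = r - 1 →
    ∃! e, e ∈ S.edges ∧ I ⊆ e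

/-- `F` covers pairs: every two vertices lie in a common edge. -/
def CoversPairs (F : RGraph r) : Prop :=
  ∀ u < F.n, ∀ v < F.n, ∃ e ∈ F.edges, u ∈ e ∧ v ∈ e

/-- Isomorphism of `r`-graphs. -/
def Isomorphic (F G : RGraph r) : Prop :=
  F.n = G.n ∧ ∃ f : ℕ → ℕ, Set.InjOn f (Set.Iio F.n) ∧ (∀ v < F.n, f v < G.n) ∧
    ∀ e : Finset ℕ, e ∈ F.edges ↔ ((∀ v ∈ e, v < F.n) ∧ e.image f ∈ G.edges)

/-- The support of a weighting. -/
noncomputable def suppW (F : RGraph r) (μ : ℕ → ℝ) : Finset ℕ :=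
  (Finset.range F.n).filter fun v => μ v ≠ 0

/-- `G` is isomorphic to the subgraph of `F` induced on the vertex set `S`. -/
def IsIsoInduced (F : RGraph r) (S : Finset ℕ) (G : RGraph r) : Prop :=
  ∃ f : ℕ → ℕ, Set.InjOn f (Set.Iio G.n) ∧ (Finset.range G.n).image f = S ∧
    ∀ e : Finset ℕ, e ∈ G.edges ↔ ((∀ v ∈ e, v < G.n) ∧ e.image f ∈ F.edges)

/-- An `r`-graph is thin if every `(r-1)`-set lies in at most one edge. -/
def ThinG (F : RGraph r) : Prop :=
  ∀ I : Finset ℕ, I.card = r - 1 → ∀ e1 ∈ F.edges, ∀ e2 ∈ F.edges,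
    I ⊆ e1 → I ⊆ e2 → e1 = e2

/-- A Steiner system (or any graph) is balanced if its Lagrangian is attained by
the uniform distribution. -/
def Balanced (F : RGraph r) : Prop := lagrangian F = lamW F (uniformW F)

/-- `e(m, r) = C(m, r-1) / (r m^r)`. -/
noncomputable def eDen (m r : ℕ) : ℝ :=
  (m.choose (r - 1) : ℝ) / ((r : ℝ) * (m : ℝ) ^ r)

/-- `d(m, r) = C(m-1, r-2) / ((r-1) m^{r-1})`. -/
noncomputable def dDen (m r : ℕ) : ℝ :=
  ((m - 1).choose (r - 2) : ℝ) / (((r : ℝ) - 1) * (m : ℝ) ^ (r - 1))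

/-- `S` is uniquely dense around `Σ_r`: the uniform weighting of `S` strictly maximizes the
weighted density among weighted `Σ_r`-free `r`-graphs covering pairs. -/
def UniquelyDense (S : RGraph r) : Prop :=
  (∀ F : RGraph r, FreeFam (SigmaFam r) F → CoversPairs F → ∀ μ : ℕ → ℝ, IsWeight F μ →
    lamW F μ ≤ lamW S (uniformW S)) ∧
  ∀ F : RGraph r, FreeFam (SigmaFam r) F → CoversPairs F → ∀ μ : ℕ → ℝ, IsWeight F μ →
    lamW F μ = lamW S (uniformW S) → Isomorphic F S ∧ μ = uniformW F


/-!
The `N`-vertex blowup `F_N` of `F` whose `i`-th class is an interval of length `≈ μ i * N` has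
`∑_E ∏_{i ∈ E} |class i|` edges, which gives the density. For the distance, given common blowups
`(G₁, ν')` of `(F, μ)` and `(G₂, ν')` of `(H, ν)`, cut each class further into intervals of length
`≈ ν' v * N`, one for every vertex `v` of `G₁` above it; blowing `H` up along the same map stays in
the clonable family `𝔥` and differs from `F_N` in `≈ d'(G₁, G₂, ν') N^r` edges.
Conversely, giving each vertex of class `i` the weight `μ i / |class i| ≤ (1 + o(1)) / N` makes
the blowup a weighted blowup of `(F, μ)`, so every `H ∈ 𝔥` on the same vertex set has
`d^w_𝔥(F, μ) ≤ |F_N △ H| ((1 + o(1)) / N)^r`.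
-/

open Finset

section Pullback

/-- The edges of the blowup of `S` on vertex set `range N` in which `x` is a clone of `β x`;
for `r`-sets `e`, the condition `#(e.image β) = r` says that `β` is injective on `e`. -/
def pullbackEdges (r N : ℕ) (β : ℕ → ℕ) (S : Finset (Finset ℕ)) : Finset (Finset ℕ) :=
  ((range N).powersetCard r).filter fun e => #(e.image β) = r ∧ e.image β ∈ S

def pullback (B : RGraph r) (β : ℕ → ℕ) (N : ℕ) : RGraph r where
  n := N
  edges := pullbackEdges r N β B.edges
  uniform _ he := (mem_powersetCard.1 (mem_filter.1 he).1).2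
  valid _ he _ hv := mem_range.1 ((mem_powersetCard.1 (mem_filter.1 he).1).1 hv)

variable {N : ℕ} {β : ℕ → ℕ}

@[simp] lemma pullback_n (B : RGraph r) : (pullback B β N).n = N := rfl

lemma mem_pullbackEdges {S : Finset (Finset ℕ)} (hS : ∀ E ∈ S, #E = r) {e : Finset ℕ} :
    e ∈ pullbackEdges r N β S ↔ (∀ v ∈ e, v < N) ∧ Set.InjOn β e ∧ e.image β ∈ S := by
  simp only [pullbackEdges, mem_filter, mem_powersetCard, subset_iff, mem_range]
  constructor
  · rintro ⟨⟨hsub, hcard⟩, himg, hS'⟩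
    exact ⟨hsub, card_image_iff.1 (himg.trans hcard.symm), hS'⟩
  · rintro ⟨hsub, hinj, hS'⟩
    have himg := hS _ hS'
    exact ⟨⟨hsub, card_image_of_injOn hinj ▸ himg⟩, himg, hS'⟩

lemma isBlowupMap_pullback (B : RGraph r) (hβ : ∀ x < N, β x < B.n) :
    IsBlowupMap B (pullback B β N) β :=
  ⟨hβ, fun _ => mem_pullbackEdges B.uniform⟩

lemma pullbackEdges_congr {β' : ℕ → ℕ} (S : Finset (Finset ℕ)) (h : ∀ x < N, β x = β' x) :
    pullbackEdges r N β S = pullbackEdges r N β' S := by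
  refine filter_congr fun e he => ?_
  rw [image_congr fun x hx => h x (mem_range.1 ((mem_powersetCard.1 he).1 hx))]

lemma pullbackEdges_comp {B G : RGraph r} {φ : ℕ → ℕ} (hφ : IsBlowupMap B G φ)
    (hβ : ∀ x < N, β x < G.n) :
    pullbackEdges r N (φ ∘ β) B.edges = pullbackEdges r N β G.edges := by
  ext e
  rw [mem_pullbackEdges B.uniform, mem_pullbackEdges G.uniform, hφ.2, ← image_image, coe_image]
  constructor
  · rintro ⟨hN, hinj, hB⟩
    exact ⟨hN, hinj.of_comp, ⟨by simpa using fun x hx => hβ x (hN x hx), hinj.image_of_comp, hB⟩⟩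
  · rintro ⟨hN, hinj, -, hφinj, hB⟩
    exact ⟨hN, hinj.comp_iff.2 hφinj, hB⟩

lemma pullbackEdges_symmDiff (S T : Finset (Finset ℕ)) :
    pullbackEdges r N β (symmDiff S T) =
      symmDiff (pullbackEdges r N β S) (pullbackEdges r N β T) := by
  ext e
  simp only [pullbackEdges, mem_symmDiff, mem_filter]
  tauto

variable {E : Finset ℕ} {f : ∀ i ∈ E, ℕ}

lemma image_image_attach_of_mem_pi (hf : f ∈ E.pi fun i => {x ∈ range N | β x = i}) :
    (E.attach.image fun i => f i.1 i.2).image β = E := by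
  have hβ (i) (hi : i ∈ E) : β (f i hi) = i := (mem_filter.1 (mem_pi.1 hf i hi)).2
  ext i
  simp only [mem_image, mem_attach, true_and, Subtype.exists]
  constructor
  · rintro ⟨_, ⟨j, hj, rfl⟩, rfl⟩
    rwa [hβ j hj]
  · exact fun hi => ⟨_, ⟨i, hi, rfl⟩, hβ i hi⟩

lemma pullbackEdges_singleton (hE : #E = r) :
    pullbackEdges r N β {E} =
      (E.pi fun i => {x ∈ range N | β x = i}).image fun f => E.attach.image fun i => f i.1 i.2 := by
  ext e
  rw [mem_pullbackEdges (by simpa using hE), mem_singleton, mem_image]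
  constructor
  · rintro ⟨hN, hinj, himg⟩
    have hex : ∀ i ∈ E, ∃ x ∈ e, β x = i := fun i hi => by simpa [← himg] using hi
    choose x hxe hxβ using hex
    refine ⟨x, mem_pi.2 fun i hi => by simpa using ⟨hN _ (hxe i hi), hxβ i hi⟩, ?_⟩
    ext y
    simp only [mem_image, mem_attach, true_and, Subtype.exists]
    constructor
    · rintro ⟨i, hi, rfl⟩
      exact hxe i hi
    · intro hy
      have hyE : β y ∈ E := himg ▸ mem_image_of_mem β hy
      exact ⟨β y, hyE, hinj (hxe _ hyE) hy (hxβ _ hyE)⟩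
  · rintro ⟨f, hf, rfl⟩
    have himg := image_image_attach_of_mem_pi hf
    have hcard : #(E.attach.image fun i => f i.1 i.2) = #E := by
      refine le_antisymm (card_image_le.trans card_attach.le) ?_
      conv_lhs => rw [← himg]
      exact card_image_le
    refine ⟨?_, card_image_iff.1 (by rw [himg, hcard]), himg⟩
    simp only [mem_image, mem_attach, true_and, Subtype.exists]
    rintro _ ⟨i, hi, rfl⟩
    exact mem_range.1 (mem_filter.1 (mem_pi.1 hf i hi)).1

lemma card_pullbackEdges_singleton (hE : #E = r) :
    #(pullbackEdges r N β {E}) = ∏ i ∈ E, #{x ∈ range N | β x = i} := by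
  rw [pullbackEdges_singleton hE, card_image_of_injOn, card_pi]
  intro f hf g hg hfg
  have hβ {f} (hf : f ∈ E.pi fun i => {x ∈ range N | β x = i}) (i) (hi : i ∈ E) :
      β (f i hi) = i := (mem_filter.1 (mem_pi.1 hf i hi)).2
  funext i hi
  have hfg : (E.attach.image fun i => f i.1 i.2) = E.attach.image fun i => g i.1 i.2 := hfg
  have hmem : f i hi ∈ E.attach.image fun i => g i.1 i.2 :=
    hfg ▸ mem_image_of_mem _ (mem_attach _ ⟨i, hi⟩)
  obtain ⟨⟨j, hj⟩, -, hji⟩ := mem_image.1 hmem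
  obtain rfl : j = i := by rw [← hβ hg j hj, ← hβ hf i hi, hji]
  exact hji.symm

lemma card_pullbackEdges {S : Finset (Finset ℕ)} (hS : ∀ E ∈ S, #E = r) :
    #(pullbackEdges r N β S) = ∑ E ∈ S, ∏ i ∈ E, #{x ∈ range N | β x = i} := by
  classical
  have hsplit : pullbackEdges r N β S = S.biUnion fun E => pullbackEdges r N β {E} := by
    ext e
    simp only [mem_biUnion, pullbackEdges, mem_filter, mem_singleton]
    constructor
    · rintro ⟨h1, h2, h3⟩
      exact ⟨e.image β, h3, h1, h2, rfl⟩
    · rintro ⟨E, hE, h1, h2, rfl⟩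
      exact ⟨h1, h2, hE⟩
  rw [hsplit, card_biUnion]
  · exact sum_congr rfl fun E hE => card_pullbackEdges_singleton (hS E hE)
  · intro E₁ _ E₂ _ hne
    simp only [Function.onFun, disjoint_left, pullbackEdges, mem_filter, mem_singleton]
    rintro e ⟨-, -, rfl⟩ ⟨-, -, h⟩
    exact hne h

end Pullback

section StepIndex

/-- For monotone `g`, the `l < t` with `g l ≤ x < g (l + 1)`. -/
def stepIndex (g : ℕ → ℕ) (t x : ℕ) : ℕ := #{l ∈ range t | g (l + 1) ≤ x}

variable {g : ℕ → ℕ} {t x l : ℕ}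

lemma stepIndex_eq (hg : Monotone g) (hl : l < t) (h₁ : g l ≤ x) (h₂ : x < g (l + 1)) :
    stepIndex g t x = l := by
  have : {l' ∈ range t | g (l' + 1) ≤ x} = range l := by
    ext l'
    simp only [mem_filter, mem_range]
    constructor
    · rintro ⟨-, h⟩
      by_contra! h'
      exact absurd ((hg (by omega : l + 1 ≤ l' + 1)).trans h) (not_le.2 h₂)
    · exact fun h => ⟨by omega, (hg (by omega : l' + 1 ≤ l)).trans h₁⟩
  rw [stepIndex, this, card_range]

lemma exists_mem_Ico_step (h₀ : g 0 ≤ x) (ht : x < g t) :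
    ∃ l < t, g l ≤ x ∧ x < g (l + 1) := by
  induction t with
  | zero => omega
  | succ t ih =>
    by_cases h : x < g t
    · obtain ⟨l, hl, hx⟩ := ih h
      exact ⟨l, by omega, hx⟩
    · exact ⟨t, by omega, by omega, ht⟩

lemma stepIndex_spec (hg : Monotone g) (h₀ : g 0 ≤ x) (ht : x < g t) :
    stepIndex g t x < t ∧ g (stepIndex g t x) ≤ x ∧ x < g (stepIndex g t x + 1) := by
  obtain ⟨l, hl, h₁, h₂⟩ := exists_mem_Ico_step h₀ ht
  rw [stepIndex_eq hg hl h₁ h₂]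
  exact ⟨hl, h₁, h₂⟩

lemma filter_stepIndex_eq (hg : Monotone g) (h₀ : g 0 = 0) (hl : l < t) :
    {x ∈ range (g t) | stepIndex g t x = l} = Ico (g l) (g (l + 1)) := by
  ext x
  simp only [mem_filter, mem_range, mem_Ico]
  constructor
  · rintro ⟨hx, rfl⟩
    exact (stepIndex_spec hg (by omega) hx).2
  · rintro ⟨h₁, h₂⟩
    exact ⟨h₂.trans_le (hg (by omega)), stepIndex_eq hg hl h₁ h₂⟩

lemma stepIndex_div_eq {g' : ℕ → ℕ} {n s : ℕ} (hg : Monotone g) (hg' : Monotone g')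
    (hgg' : ∀ i ≤ s, g' (n * i) = g i) (h₀ : g 0 ≤ x) (hx : x < g s) :
    stepIndex g' (n * s) x / n = stepIndex g s x := by
  have h₀' : g' (n * 0) ≤ x := (hgg' 0 (Nat.zero_le _)).trans_le h₀
  have hx' : x < g' (n * s) := (hgg' s le_rfl).symm ▸ hx
  rw [mul_zero] at h₀'
  obtain ⟨hq, h₁, h₂⟩ := stepIndex_spec hg' h₀' hx'
  set q := stepIndex g' (n * s) x
  have hn : 0 < n := Nat.pos_of_ne_zero fun h => by simp [h] at hq
  have hqs : q / n < s := Nat.div_lt_of_lt_mul hq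
  refine (stepIndex_eq hg hqs ?_ ?_).symm
  · rw [← hgg' _ hqs.le]
    exact (hg' (Nat.mul_div_le q n)).trans h₁
  · rw [← hgg' _ hqs]
    exact h₂.trans_le (hg' (by rw [Nat.mul_add_one]; exact Nat.lt_mul_div_succ q hn))

end StepIndex

section Classes

def cumSum (w : ℕ → ℝ) (i : ℕ) : ℝ := ∑ j ∈ range i, w j

noncomputable def classStart (w : ℕ → ℝ) (N i : ℕ) : ℕ := ⌊cumSum w i * N⌋₊

/-- `classOf w t N` cuts `range N` into the intervals `[classStart w N i, classStart w N (i + 1))`,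
of lengths about `w i * N`. -/
noncomputable def classOf (w : ℕ → ℝ) (t N x : ℕ) : ℕ := stepIndex (classStart w N) t x

noncomputable def classSize (w : ℕ → ℝ) (N i : ℕ) : ℕ := classStart w N (i + 1) - classStart w N i

variable {w : ℕ → ℝ} {t N x l : ℕ}

lemma cumSum_succ (w : ℕ → ℝ) (i : ℕ) : cumSum w (i + 1) = cumSum w i + w i :=
  sum_range_succ w i

lemma monotone_classStart (hw : ∀ j, 0 ≤ w j) (N : ℕ) : Monotone (classStart w N) :=
  fun _ _ h => Nat.floor_le_floor (mul_le_mul_of_nonneg_right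
    (sum_le_sum_of_subset_of_nonneg (range_subset_range.2 h) fun j _ _ => hw j) N.cast_nonneg)

lemma classStart_zero (w : ℕ → ℝ) (N : ℕ) : classStart w N 0 = 0 := by
  simp [classStart, cumSum]

lemma classStart_of_sum_eq_one (h₁ : ∑ j ∈ range t, w j = 1) (N : ℕ) :
    classStart w N t = N := by
  simp [classStart, cumSum, h₁]

lemma classOf_spec (hw : ∀ j, 0 ≤ w j) (h₁ : ∑ j ∈ range t, w j = 1) (hx : x < N) :
    classOf w t N x < t ∧ classStart w N (classOf w t N x) ≤ x ∧
      x < classStart w N (classOf w t N x + 1) :=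
  stepIndex_spec (monotone_classStart hw N) (by rw [classStart_zero]; omega)
    (by rwa [classStart_of_sum_eq_one h₁])

lemma card_filter_classOf (hw : ∀ j, 0 ≤ w j) (h₁ : ∑ j ∈ range t, w j = 1) (hl : l < t) :
    #{x ∈ range N | classOf w t N x = l} = classSize w N l := by
  have h := filter_stepIndex_eq (monotone_classStart hw N) (classStart_zero w N) hl
  rw [classStart_of_sum_eq_one h₁] at h
  unfold classOf
  rw [h, Nat.card_Ico, classSize]

lemma weight_classOf_ne_zero (hw : ∀ j, 0 ≤ w j) (h₁ : ∑ j ∈ range t, w j = 1) (hx : x < N) :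
    w (classOf w t N x) ≠ 0 := by
  obtain ⟨-, h₁, h₂⟩ := classOf_spec hw h₁ hx
  intro h
  rw [classStart, cumSum_succ, h, add_zero] at h₂
  exact absurd h₁ (not_le.2 h₂)

lemma tendsto_classSize_div (hw : ∀ j, 0 ≤ w j) (l : ℕ) :
    Tendsto (fun N : ℕ => (classSize w N l : ℝ) / N) atTop (nhds (w l)) := by
  have hfloor (i : ℕ) : Tendsto (fun N : ℕ => (classStart w N i : ℝ) / N) atTop
      (nhds (cumSum w i)) :=
    (tendsto_nat_floor_mul_div_atTop (sum_nonneg fun j _ => hw j)).comp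
      tendsto_natCast_atTop_atTop
  have h := (hfloor (l + 1)).sub (hfloor l)
  rw [cumSum_succ, add_sub_cancel_left] at h
  refine h.congr fun N => ?_
  rw [classSize, Nat.cast_sub (monotone_classStart hw N (Nat.le_succ l)), sub_div]

end Classes

section WeightedBlowup

variable {F : RGraph r} {μ : ℕ → ℝ}

lemma IsWeight.n_pos (hμ : IsWeight F μ) : 0 < F.n := by
  refine Nat.pos_of_ne_zero fun h => ?_
  simpa [h] using hμ.2.2

noncomputable def weightedBlowup (F : RGraph r) (μ : ℕ → ℝ) (N : ℕ) : RGraph r :=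
  pullback F (classOf μ F.n N) N

lemma isBlowupMap_weightedBlowup (hμ : IsWeight F μ) (N : ℕ) :
    IsBlowupMap F (weightedBlowup F μ N) (classOf μ F.n N) :=
  isBlowupMap_pullback F fun _ hx => (classOf_spec hμ.1 hμ.2.2 hx).1

lemma card_edges_weightedBlowup (hμ : IsWeight F μ) (N : ℕ) :
    #(weightedBlowup F μ N).edges = ∑ E ∈ F.edges, ∏ i ∈ E, classSize μ N i :=
  (card_pullbackEdges F.uniform).trans (sum_congr rfl fun E hE => prod_congr rfl
    fun i hi => card_filter_classOf hμ.1 hμ.2.2 (F.valid E hE i hi))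

lemma tendsto_sum_prod_div {S : Finset (Finset ℕ)} (hS : ∀ E ∈ S, #E = r)
    {c : ℕ → ℕ → ℕ} {w : ℕ → ℝ}
    (hc : ∀ E ∈ S, ∀ v ∈ E, Tendsto (fun N : ℕ => (c N v : ℝ) / N) atTop (nhds (w v))) :
    Tendsto (fun N : ℕ => ((∑ E ∈ S, ∏ v ∈ E, c N v : ℕ) : ℝ) / (N : ℝ) ^ r) atTop
      (nhds (∑ E ∈ S, ∏ v ∈ E, w v)) := by
  refine (tendsto_finsetSum _ fun E hE => tendsto_finsetProd _ (hc E hE)).congr fun N => ?_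
  push_cast
  rw [sum_div]
  refine sum_congr rfl fun E hE => ?_
  rw [prod_div_distrib, prod_const, hS E hE]

lemma tendsto_density_weightedBlowup (hμ : IsWeight F μ) :
    Tendsto (fun N : ℕ => (#(weightedBlowup F μ N).edges : ℝ) / (N : ℝ) ^ r) atTop
      (nhds (lamW F μ)) := by
  simp only [card_edges_weightedBlowup hμ]
  exact tendsto_sum_prod_div F.uniform fun _ _ i _ => tendsto_classSize_div hμ.1 i

end WeightedBlowup

section CommonBlowup

lemma sum_range_mul_div_mod {M : Type*} [AddCommMonoid M] (f : ℕ → ℕ → M) (a b : ℕ) :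
    ∑ p ∈ range (b * a), f (p / b) (p % b) = ∑ i ∈ range a, ∑ j ∈ range b, f i j := by
  induction a with
  | zero => simp
  | succ a ih =>
    rw [Nat.mul_succ, sum_range_add, ih, sum_range_succ]
    congr 1
    refine sum_congr rfl fun j hj => ?_
    have hj : j < b := mem_range.1 hj
    rw [Nat.mul_add_div (by omega), Nat.div_eq_of_lt hj, add_zero, Nat.mul_add_mod,
      Nat.mod_eq_of_lt hj]

variable {F H : RGraph r} {μ ν : ℕ → ℝ}

/-- The product weighting on `range (H.n * F.n)`, with `p ↦ p / H.n` and `p ↦ p % H.n` as the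
two blowup maps. -/
lemma exists_common_wIsBlowup (hμ : IsWeight F μ) (hν : IsWeight H ν) :
    ∃ G₁ G₂ : RGraph r, ∃ ν' : ℕ → ℝ, G₁.n = G₂.n ∧ WIsBlowup F μ G₁ ν' ∧ WIsBlowup H ν G₂ ν' := by
  have hb := hν.n_pos
  set ν' : ℕ → ℝ := fun p => μ (p / H.n) * ν (p % H.n)
  have hfib (P : ℕ → ℕ → Prop) [∀ i j, Decidable (P i j)] :
      ∑ p ∈ range (H.n * F.n) with P (p / H.n) (p % H.n), ν' p =
        ∑ i ∈ range F.n, ∑ j ∈ range H.n, if P i j then μ i * ν j else 0 := by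
    rw [sum_filter]
    exact sum_range_mul_div_mod (fun i j => if P i j then μ i * ν j else 0) _ _
  have hweight : IsWeight (pullback F (· / H.n) (H.n * F.n)) ν' := by
    refine ⟨fun p => mul_nonneg (hμ.1 _) (hν.1 _), fun p hp => ?_, ?_⟩
    · rw [pullback_n] at hp
      have hμ0 : μ (p / H.n) = 0 := hμ.2.1 _ ((Nat.le_div_iff_mul_le hb).2 (by rwa [mul_comm]))
      simp only [ν', hμ0, zero_mul]
    · simpa [← mul_sum, ← sum_mul, hν.2.2, hμ.2.2] using hfib (fun _ _ => True)
  refine ⟨pullback F (· / H.n) (H.n * F.n), pullback H (· % H.n) (H.n * F.n), ν', rfl,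
    ⟨hweight, _, isBlowupMap_pullback F fun p hp => Nat.div_lt_of_lt_mul hp, fun i hi => ?_⟩,
    ⟨hweight, _, isBlowupMap_pullback H fun p _ => Nat.mod_lt p hb, fun j hj => ?_⟩⟩
  · simpa [← mul_sum, hν.2.2, hi] using (hfib (fun i' _ => i' = i)).symm
  · simpa [← sum_mul, hμ.2.2, hj] using (hfib (fun _ j' => j' = j)).symm

lemma isBlowupMap_id (G : RGraph r) : IsBlowupMap G G id :=
  ⟨fun _ hv => hv, fun e => ⟨fun he => ⟨G.valid e he, Set.injOn_id _, by rwa [image_id]⟩,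
    fun ⟨_, _, he⟩ => by rwa [image_id] at he⟩⟩

lemma wIsBlowup_self {G : RGraph r} {ν : ℕ → ℝ} (hν : IsWeight G ν) : WIsBlowup G ν G ν :=
  ⟨hν, id, isBlowupMap_id G, fun i hi => by simp [filter_eq', hi]⟩

end CommonBlowup

section Refinement

/-- Position `n * i + v` carries the weight of vertex `v` if `v` lies in the class of `i`. -/
noncomputable def positionWeight (φ : ℕ → ℕ) (n : ℕ) (ν : ℕ → ℝ) (p : ℕ) : ℝ :=
  if φ (p % n) = p / n then ν (p % n) else 0

/-- Splitting each class `i` of `classOf μ s N` by the vertices `v < n` with `φ v = i` gives a map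
`range N → range n` whose fibers have about `ν v * N` elements. -/
noncomputable def refineMap (φ : ℕ → ℕ) (n : ℕ) (ν : ℕ → ℝ) (s N x : ℕ) : ℕ :=
  classOf (positionWeight φ n ν) (n * s) N x % n

variable {F G : RGraph r} {μ ν : ℕ → ℝ} {φ : ℕ → ℕ} {N x : ℕ}

lemma positionWeight_nonneg (hν : IsWeight G ν) (p : ℕ) : 0 ≤ positionWeight φ G.n ν p := by
  unfold positionWeight
  split_ifs
  exacts [hν.1 _, le_rfl]

lemma positionWeight_apply {v : ℕ} (hv : v < G.n) :
    positionWeight φ G.n ν (G.n * φ v + v) = ν v := by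
  rw [positionWeight, Nat.mul_add_div (by omega), Nat.div_eq_of_lt hv, add_zero,
    Nat.mul_add_mod, Nat.mod_eq_of_lt hv, if_pos rfl]

lemma cumSum_positionWeight
    (hfib : ∀ i < F.n, μ i = ∑ v ∈ range G.n with φ v = i, ν v) {i : ℕ} (hi : i ≤ F.n) :
    cumSum (positionWeight φ G.n ν) (G.n * i) = cumSum μ i := by
  have h : cumSum (positionWeight φ G.n ν) (G.n * i) =
      ∑ i' ∈ range i, ∑ v ∈ range G.n, if φ v = i' then ν v else 0 :=
    sum_range_mul_div_mod (fun i' v => if φ v = i' then ν v else 0) i G.n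
  rw [h, cumSum]
  exact sum_congr rfl fun i' hi' => by rw [← sum_filter, hfib i' (by simp at hi'; omega)]

lemma sum_positionWeight (hfib : ∀ i < F.n, μ i = ∑ v ∈ range G.n with φ v = i, ν v)
    (hμ : IsWeight F μ) :
    ∑ p ∈ range (G.n * F.n), positionWeight φ G.n ν p = 1 :=
  (cumSum_positionWeight hfib le_rfl).trans hμ.2.2

lemma positionWeight_classOf (hfib : ∀ i < F.n, μ i = ∑ v ∈ range G.n with φ v = i, ν v)
    (hμ : IsWeight F μ) (hν : IsWeight G ν) (hx : x < N) :
    φ (classOf (positionWeight φ G.n ν) (G.n * F.n) N x % G.n) =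
      classOf (positionWeight φ G.n ν) (G.n * F.n) N x / G.n := by
  by_contra h
  exact weight_classOf_ne_zero (positionWeight_nonneg hν) (sum_positionWeight hfib hμ) hx (if_neg h)

lemma comp_refineMap (hfib : ∀ i < F.n, μ i = ∑ v ∈ range G.n with φ v = i, ν v)
    (hμ : IsWeight F μ) (hν : IsWeight G ν) (hx : x < N) :
    φ (refineMap φ G.n ν F.n N x) = classOf μ F.n N x := by
  rw [refineMap, positionWeight_classOf hfib hμ hν hx]
  refine stepIndex_div_eq (monotone_classStart hμ.1 N)
    (monotone_classStart (positionWeight_nonneg hν) N) (fun i hi => ?_)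
    (by rw [classStart_zero]; omega) (by rwa [classStart_of_sum_eq_one hμ.2.2])
  rw [classStart, cumSum_positionWeight hfib hi, classStart]

lemma card_filter_refineMap (hfib : ∀ i < F.n, μ i = ∑ v ∈ range G.n with φ v = i, ν v)
    (hμ : IsWeight F μ) (hν : IsWeight G ν)
    (hφ : ∀ v < G.n, φ v < F.n) {v : ℕ} (hv : v < G.n) :
    #{x ∈ range N | refineMap φ G.n ν F.n N x = v} =
      classSize (positionWeight φ G.n ν) N (G.n * φ v + v) := by
  have hlt : G.n * φ v + v < G.n * F.n := by
    have := hφ v hv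
    calc G.n * φ v + v < G.n * (φ v + 1) := by rw [Nat.mul_add_one]; omega
      _ ≤ G.n * F.n := Nat.mul_le_mul_left _ this
  rw [← card_filter_classOf (positionWeight_nonneg hν) (sum_positionWeight hfib hμ) hlt]
  congr 1
  refine filter_congr fun x hx => ?_
  rw [refineMap]
  constructor
  · intro h
    have hq := positionWeight_classOf hfib hμ hν (mem_range.1 hx)
    rw [← Nat.div_add_mod (classOf _ _ N x) G.n, ← hq, h]
  · intro h
    rw [h, Nat.mul_add_mod, Nat.mod_eq_of_lt hv]

lemma tendsto_card_filter_refineMap_div (hfib : ∀ i < F.n, μ i = ∑ v ∈ range G.n with φ v = i, ν v)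
    (hμ : IsWeight F μ) (hν : IsWeight G ν)
    (hφ : ∀ v < G.n, φ v < F.n) {v : ℕ} (hv : v < G.n) :
    Tendsto (fun N : ℕ => (#{x ∈ range N | refineMap φ G.n ν F.n N x = v} : ℝ) / N) atTop
      (nhds (ν v)) := by
  simp only [card_filter_refineMap hfib hμ hν hφ hv]
  rw [← positionWeight_apply (φ := φ) (ν := ν) hv]
  exact tendsto_classSize_div (positionWeight_nonneg hν) _

end Refinement

section Distance

variable {𝔥 : Set (RGraph r)} {F G H : RGraph r} {μ ν : ℕ → ℝ}

lemma IsWeight.of_n_eq (hν : IsWeight G ν) (hn : G.n = H.n) : IsWeight H ν :=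
  ⟨hν.1, hn ▸ hν.2.1, hn ▸ hν.2.2⟩

lemma isWeight_uniformW (hG : 0 < G.n) : IsWeight G (uniformW G) := by
  refine ⟨fun v => ?_, fun v hv => if_neg (by omega), ?_⟩
  · unfold uniformW
    split_ifs
    exacts [by positivity, le_rfl]
  · have h (v) (hv : v ∈ range G.n) : uniformW G v = (G.n : ℝ)⁻¹ := if_pos (mem_range.1 hv)
    rw [sum_congr rfl h, sum_const, card_range, nsmul_eq_mul, mul_inv_cancel₀ (by positivity)]

lemma Clonable.exists_mem_n_eq (h𝔥 : Clonable 𝔥) (hH : H ∈ 𝔥) (hH₀ : 0 < H.n) (N : ℕ) :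
    ∃ H' ∈ 𝔥, H'.n = N :=
  ⟨pullback H (fun _ => 0) N, h𝔥 H hH _ ⟨_, isBlowupMap_pullback H fun _ _ => hH₀⟩, rfl⟩

lemma card_of_mem_symmDiff {G₁ G₂ : RGraph r} :
    ∀ E ∈ symmDiff G₁.edges G₂.edges, #E = r := by
  intro E hE
  rcases mem_symmDiff.1 hE with ⟨h, -⟩ | ⟨h, -⟩
  exacts [G₁.uniform E h, G₂.uniform E h]

lemma lt_of_mem_symmDiff {G₁ G₂ : RGraph r} (hn : G₁.n = G₂.n) {E : Finset ℕ}
    (hE : E ∈ symmDiff G₁.edges G₂.edges) {v : ℕ} (hv : v ∈ E) : v < G₁.n := by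
  rcases mem_symmDiff.1 hE with ⟨h, -⟩ | ⟨h, -⟩
  exacts [G₁.valid E h v hv, hn ▸ G₂.valid E h v hv]

lemma distFam_le_card (hH : H ∈ 𝔥) (hn : H.n = G.n) :
    distFam 𝔥 G ≤ #(symmDiff G.edges H.edges) :=
  csInf_le ⟨0, by rintro _ ⟨_, _, _, rfl⟩; positivity⟩ ⟨H, hH, hn, rfl⟩

lemma distFam_eq_zero (h : ∀ H ∈ 𝔥, H.n ≠ G.n) : distFam 𝔥 G = 0 := by
  rw [distFam, Set.eq_empty_of_forall_notMem (s := {x : ℝ | _})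
    (by rintro _ ⟨H, hH, hn, -⟩; exact h H hH hn), Real.sInf_empty]

lemma exists_distFam_eq (h : ∃ H ∈ 𝔥, H.n = G.n) :
    ∃ H ∈ 𝔥, H.n = G.n ∧ distFam 𝔥 G = #(symmDiff G.edges H.edges) := by
  classical
  have hP : ∃ k, ∃ H ∈ 𝔥, H.n = G.n ∧ #(symmDiff G.edges H.edges) = k :=
    let ⟨H, hH, hn⟩ := h
    ⟨_, H, hH, hn, rfl⟩
  obtain ⟨H, hH, hn, hk⟩ := Nat.find_spec hP
  refine ⟨H, hH, hn, IsLeast.csInf_eq ⟨⟨H, hH, hn, by rw [hk]⟩, ?_⟩⟩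
  rintro _ ⟨H', hH', hn', rfl⟩
  rw [hk]
  exact_mod_cast Nat.find_min' hP ⟨H', hH', hn', rfl⟩

lemma dPrime_nonneg {E₁ E₂ : Finset (Finset ℕ)} (hν : ∀ v, 0 ≤ ν v) : 0 ≤ dPrime E₁ E₂ ν :=
  sum_nonneg fun _ _ => prod_nonneg fun v _ => hν v

lemma dPrime_le_card_mul {E₁ E₂ : Finset (Finset ℕ)} (hE : ∀ E ∈ symmDiff E₁ E₂, #E = r)
    (hν : ∀ v, 0 ≤ ν v) {a : ℝ} (ha : ∀ v, ν v ≤ a) :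
    dPrime E₁ E₂ ν ≤ #(symmDiff E₁ E₂) * a ^ r := by
  rw [← nsmul_eq_mul]
  refine sum_le_card_nsmul _ _ _ fun E hE' => ?_
  calc ∏ v ∈ E, ν v ≤ ∏ _v ∈ E, a := prod_le_prod (fun v _ => hν v) fun v _ => ha v
    _ = a ^ r := by rw [prod_const, hE E hE']

lemma wDist_nonneg (F₁ : RGraph r) (μ₁ : ℕ → ℝ) (F₂ : RGraph r) (μ₂ : ℕ → ℝ) :
    0 ≤ wDist F₁ μ₁ F₂ μ₂ :=
  Real.sInf_nonneg (by rintro _ ⟨_, _, _, _, h, _, rfl⟩; exact dPrime_nonneg h.1.1)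

lemma wDist_le_dPrime {G₁ G₂ : RGraph r} {ν' : ℕ → ℝ} (hn : G₁.n = G₂.n)
    (h₁ : WIsBlowup F μ G₁ ν') (h₂ : WIsBlowup H ν G₂ ν') :
    wDist F μ H ν ≤ dPrime G₁.edges G₂.edges ν' :=
  csInf_le ⟨0, by rintro _ ⟨_, _, _, _, h, _, rfl⟩; exact dPrime_nonneg h.1.1⟩
    ⟨G₁, G₂, ν', hn, h₁, h₂, rfl⟩

lemma wDistFam_le_wDist (hH : H ∈ 𝔥) (hν : IsWeight H ν) : wDistFam 𝔥 F μ ≤ wDist F μ H ν :=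
  csInf_le ⟨0, by rintro _ ⟨_, _, _, _, rfl⟩; exact wDist_nonneg _ _ _ _⟩ ⟨H, hH, ν, hν, rfl⟩

lemma wDistFam_eq_zero (h : ∀ H ∈ 𝔥, H.n = 0) : wDistFam 𝔥 F μ = 0 := by
  rw [wDistFam, Set.eq_empty_of_forall_notMem (s := {x : ℝ | _}) (by
    rintro _ ⟨H, hH, ν, hν, -⟩
    exact hν.n_pos.ne' (h H hH)), Real.sInf_empty]

end Distance

section Limits

variable {𝔥 : Set (RGraph r)} {F H : RGraph r} {μ ν : ℕ → ℝ} {N : ℕ}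

@[simp] lemma weightedBlowup_n : (weightedBlowup F μ N).n = N := rfl

lemma distFam_weightedBlowup_le (hμ : IsWeight F μ) (h𝔥 : Clonable 𝔥) (hH : H ∈ 𝔥)
    {G₁ G₂ : RGraph r} {ν' : ℕ → ℝ} {φ₁ φ₂ : ℕ → ℕ} (hn : G₁.n = G₂.n) (hν' : IsWeight G₁ ν')
    (hφ₁ : IsBlowupMap F G₁ φ₁) (hfib : ∀ i < F.n, μ i = ∑ v ∈ range G₁.n with φ₁ v = i, ν' v)
    (hφ₂ : IsBlowupMap H G₂ φ₂) (N : ℕ) :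
    distFam 𝔥 (weightedBlowup F μ N) ≤
      ∑ S ∈ symmDiff G₁.edges G₂.edges, ∏ v ∈ S,
        (#{x ∈ range N | refineMap φ₁ G₁.n ν' F.n N x = v} : ℝ) := by
  set β := refineMap φ₁ G₁.n ν' F.n N
  have hβ₁ : ∀ x < N, β x < G₁.n := fun x _ => Nat.mod_lt _ hν'.n_pos
  have hβ₂ : ∀ x < N, β x < G₂.n := hn ▸ hβ₁
  have hmem : pullback H (φ₂ ∘ β) N ∈ 𝔥 :=
    h𝔥 H hH _ ⟨_, isBlowupMap_pullback H fun x hx => hφ₂.1 _ (hβ₂ x hx)⟩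
  have h₁ : (weightedBlowup F μ N).edges = pullbackEdges r N β G₁.edges := by
    rw [← pullbackEdges_comp hφ₁ hβ₁]
    exact pullbackEdges_congr _ fun x hx => (comp_refineMap hfib hμ hν' hx).symm
  have h₂ : (pullback H (φ₂ ∘ β) N).edges = pullbackEdges r N β G₂.edges :=
    pullbackEdges_comp hφ₂ hβ₂
  refine (distFam_le_card (G := weightedBlowup F μ N) hmem rfl).trans_eq ?_
  rw [h₁, h₂, ← pullbackEdges_symmDiff, card_pullbackEdges card_of_mem_symmDiff]
  push_cast
  rfl

lemma eventually_distFam_weightedBlowup_div_lt (hμ : IsWeight F μ) (h𝔥 : Clonable 𝔥)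
    (hH : H ∈ 𝔥) {G₁ G₂ : RGraph r} {ν' : ℕ → ℝ} (hn : G₁.n = G₂.n)
    (h₁ : WIsBlowup F μ G₁ ν') (h₂ : WIsBlowup H ν G₂ ν') {b : ℝ}
    (hb : dPrime G₁.edges G₂.edges ν' < b) :
    ∀ᶠ N : ℕ in atTop, distFam 𝔥 (weightedBlowup F μ N) / (N : ℝ) ^ r < b := by
  obtain ⟨hν', φ₁, hφ₁, hfib⟩ := h₁
  obtain ⟨-, φ₂, hφ₂, -⟩ := h₂
  have hlim := tendsto_sum_prod_div card_of_mem_symmDiff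
    (c := fun N v => #{x ∈ range N | refineMap φ₁ G₁.n ν' F.n N x = v}) fun S hS v hv =>
      tendsto_card_filter_refineMap_div hfib hμ hν' hφ₁.1 (lt_of_mem_symmDiff hn hS hv)
  filter_upwards [hlim.eventually (gt_mem_nhds hb)] with N hN
  refine lt_of_le_of_lt (div_le_div_of_nonneg_right ?_ (by positivity)) hN
  push_cast
  exact distFam_weightedBlowup_le hμ h𝔥 hH hn hν' hφ₁ hfib hφ₂ N

noncomputable def spreadWeight (F : RGraph r) (μ : ℕ → ℝ) (N x : ℕ) : ℝ :=
  if x < N then μ (classOf μ F.n N x) / classSize μ N (classOf μ F.n N x) else 0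

lemma spreadWeight_nonneg (hμ : IsWeight F μ) (x : ℕ) : 0 ≤ spreadWeight F μ N x := by
  unfold spreadWeight
  split_ifs
  exacts [div_nonneg (hμ.1 _) (Nat.cast_nonneg _), le_rfl]

lemma sum_filter_spreadWeight (hμ : IsWeight F μ)
    (hN : ∀ i < F.n, 0 < μ i → 0 < classSize μ N i) {i : ℕ} (hi : i < F.n) :
    ∑ x ∈ range N with classOf μ F.n N x = i, spreadWeight F μ N x = μ i := by
  have hconst : ∀ x ∈ (range N).filter (classOf μ F.n N · = i),
      spreadWeight F μ N x = μ i / classSize μ N i := by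
    intro x hx
    obtain ⟨hx', rfl⟩ := mem_filter.1 hx
    exact if_pos (mem_range.1 hx')
  rw [sum_congr rfl hconst, sum_const, card_filter_classOf hμ.1 hμ.2.2 hi, nsmul_eq_mul]
  rcases (hμ.1 i).eq_or_lt with h | h
  · rw [← h, zero_div, mul_zero]
  · exact mul_div_cancel₀ _ (by exact_mod_cast (hN i hi h).ne')

lemma wIsBlowup_spreadWeight (hμ : IsWeight F μ)
    (hN : ∀ i < F.n, 0 < μ i → 0 < classSize μ N i) :
    WIsBlowup F μ (weightedBlowup F μ N) (spreadWeight F μ N) := by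
  refine ⟨⟨spreadWeight_nonneg hμ, fun x hx => if_neg (by simpa using hx), ?_⟩, _,
    isBlowupMap_weightedBlowup hμ N, fun i hi => (sum_filter_spreadWeight hμ hN hi).symm⟩
  rw [weightedBlowup_n, ← sum_fiberwise_of_maps_to (g := classOf μ F.n N) (t := range F.n)
    fun x hx => mem_range.2 (classOf_spec hμ.1 hμ.2.2 (mem_range.1 hx)).1, ← hμ.2.2]
  exact sum_congr rfl fun i hi => sum_filter_spreadWeight hμ hN (mem_range.1 hi)

lemma spreadWeight_le (hμ : IsWeight F μ) {c : ℝ} (hc₀ : 0 ≤ c)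
    (hc : ∀ i < F.n, μ i * N ≤ c * classSize μ N i) (x : ℕ) :
    spreadWeight F μ N x ≤ c / N := by
  unfold spreadWeight
  split_ifs with hx
  · set i := classOf μ F.n N x
    rcases (Nat.cast_nonneg (α := ℝ) (classSize μ N i)).eq_or_lt with h | h
    · rw [← h, div_zero]
      positivity
    · rw [div_le_div_iff₀ h (by exact_mod_cast (Nat.zero_le x).trans_lt hx)]
      linarith [hc i (classOf_spec hμ.1 hμ.2.2 hx).1]
  · positivity

lemma eventually_mul_le_classSize (hμ : IsWeight F μ) {c : ℝ} (hc : 1 < c) :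
    ∀ᶠ N : ℕ in atTop, ∀ i < F.n, μ i * N ≤ c * classSize μ N i := by
  have h : ∀ i ∈ range F.n, ∀ᶠ N : ℕ in atTop, μ i * N ≤ c * classSize μ N i := by
    intro i _
    rcases (hμ.1 i).eq_or_lt with h | h
    · exact Eventually.of_forall fun N => by rw [← h, zero_mul]; positivity
    have hlt : μ i / c < μ i := div_lt_self h hc
    filter_upwards [(tendsto_classSize_div hμ.1 i).eventually (lt_mem_nhds hlt),
      eventually_gt_atTop 0] with N hN hN₀
    rw [div_lt_div_iff₀ (by positivity) (by exact_mod_cast hN₀)] at hN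
    linarith
  simpa using (eventually_all_finset _).2 h

lemma wDistFam_le_card_mul (hμ : IsWeight F μ) (hH : H ∈ 𝔥) (hn : H.n = N) (hN : 0 < N)
    {c : ℝ} (hc₀ : 0 ≤ c) (hc : ∀ i < F.n, μ i * N ≤ c * classSize μ N i) :
    wDistFam 𝔥 F μ ≤ #(symmDiff (weightedBlowup F μ N).edges H.edges) * (c / N) ^ r := by
  have hpos : ∀ i < F.n, 0 < μ i → 0 < classSize μ N i := fun i hi h => by
    have : (0 : ℝ) < c * classSize μ N i :=
      (mul_pos h (by exact_mod_cast hN)).trans_le (hc i hi)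
    exact_mod_cast pos_of_mul_pos_right this hc₀
  have hw := wIsBlowup_spreadWeight hμ hpos
  have hwH : IsWeight H (spreadWeight F μ N) := hw.1.of_n_eq hn.symm
  calc wDistFam 𝔥 F μ ≤ wDist F μ H (spreadWeight F μ N) := wDistFam_le_wDist hH hwH
    _ ≤ dPrime (weightedBlowup F μ N).edges H.edges (spreadWeight F μ N) :=
      wDist_le_dPrime hn.symm hw (wIsBlowup_self hwH)
    _ ≤ _ := dPrime_le_card_mul card_of_mem_symmDiff (spreadWeight_nonneg hμ)
      (spreadWeight_le hμ hc₀ hc)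

lemma eventually_wDistFam_le (hμ : IsWeight F μ) (h𝔥 : ∀ N, ∃ H ∈ 𝔥, H.n = N) {c : ℝ}
    (hc : 1 < c) :
    ∀ᶠ N : ℕ in atTop,
      wDistFam 𝔥 F μ ≤ c ^ r * (distFam 𝔥 (weightedBlowup F μ N) / (N : ℝ) ^ r) := by
  filter_upwards [eventually_mul_le_classSize hμ hc, eventually_gt_atTop 0] with N hc' hN
  obtain ⟨H, hH, hn, hd⟩ := exists_distFam_eq (G := weightedBlowup F μ N) (h𝔥 N)
  convert wDistFam_le_card_mul hμ hH (N := N) hn hN (by linarith) hc' using 1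
  rw [hd, div_pow]
  ring

end Limits

lemma exists_one_lt_mul_pow_lt {a b : ℝ} (hab : a < b) (r : ℕ) : ∃ c > 1, a * c ^ r < b := by
  have hlim : Tendsto (fun c : ℝ => a * c ^ r) (nhdsWithin 1 (Set.Ioi 1)) (nhds a) := by
    simpa using ((by fun_prop : Continuous fun c : ℝ => a * c ^ r).tendsto 1).mono_left
      nhdsWithin_le_nhds
  exact ((hlim.eventually (gt_mem_nhds hab)).and self_mem_nhdsWithin).exists.imp
    fun c hc => ⟨hc.2, hc.1⟩

lemma tendsto_distFam_weightedBlowup {𝔥 : Set (RGraph r)} {F : RGraph r} {μ : ℕ → ℝ}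
    (hμ : IsWeight F μ) (h𝔥 : Clonable 𝔥) :
    Tendsto (fun N : ℕ => distFam 𝔥 (weightedBlowup F μ N) / (N : ℝ) ^ r) atTop
      (nhds (wDistFam 𝔥 F μ)) := by
  by_cases h : ∃ H ∈ 𝔥, 0 < H.n
  swap
  · simp only [not_exists, not_and, not_lt] at h
    rw [wDistFam_eq_zero fun H hH => Nat.le_zero.1 (h H hH)]
    refine tendsto_const_nhds.congr' ?_
    filter_upwards [eventually_gt_atTop 0] with N hN
    rw [distFam_eq_zero fun H hH hn => (h H hH).not_gt (hn ▸ hN), zero_div]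
  obtain ⟨H₀, hH₀, hH₀n⟩ := h
  refine tendsto_order.2 ⟨fun a ha => ?_, fun b hb => ?_⟩
  · obtain ⟨c, hc, hac⟩ := exists_one_lt_mul_pow_lt ha r
    filter_upwards [eventually_wDistFam_le hμ (h𝔥.exists_mem_n_eq hH₀ hH₀n) hc] with N hN
    exact lt_of_mul_lt_mul_left (by linarith) (by positivity : (0 : ℝ) ≤ c ^ r)
  · obtain ⟨_, ⟨H, hH, ν, hν, rfl⟩, hHb⟩ := exists_lt_of_csInf_lt
      (s := {x | ∃ H ∈ 𝔥, ∃ ν, IsWeight H ν ∧ x = wDist F μ H ν})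
      ⟨_, H₀, hH₀, _, isWeight_uniformW hH₀n, rfl⟩ hb
    obtain ⟨G₁, G₂, ν', hn, h₁, h₂⟩ := exists_common_wIsBlowup hμ hν
    obtain ⟨_, ⟨G₁, G₂, ν', hn, h₁, h₂, rfl⟩, hGb⟩ := exists_lt_of_csInf_lt
      (s := {x | ∃ (G₁ G₂ : RGraph r) (ν' : ℕ → ℝ), G₁.n = G₂.n ∧
        WIsBlowup F μ G₁ ν' ∧ WIsBlowup H ν G₂ ν' ∧ x = dPrime G₁.edges G₂.edges ν'})
      ⟨_, G₁, G₂, ν', hn, h₁, h₂, rfl⟩ hHb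
    exact eventually_distFam_weightedBlowup_div_lt hμ h𝔥 hH hn h₁ h₂ hGb

/-- For every weighted `r`-graph `(F, μ)` there is a sequence of blowups `G n`
of `F` with `v(G n) → ∞`, `|G n|/v(G n)^r → λ(F, μ)`, and `d_𝔥(G n)/v(G n)^r → d^w_𝔥(F, μ)`
for every clonable family `𝔥`. -/
theorem exists_blowup_sequence {r : ℕ} (F : RGraph r) (μ : ℕ → ℝ) (hμ : IsWeight F μ) :
    ∃ G : ℕ → RGraph r,
      (∀ n, IsBlowup F (G n)) ∧
      Tendsto (fun n => (G n).n) atTop atTop ∧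
      Tendsto (fun n => ((G n).edges.card : ℝ) / ((G n).n : ℝ) ^ r) atTop (nhds (lamW F μ)) ∧
      ∀ 𝔥 : Set (RGraph r), Clonable 𝔥 →
        Tendsto (fun n => distFam 𝔥 (G n) / ((G n).n : ℝ) ^ r) atTop
          (nhds (wDistFam 𝔥 F μ)) :=
  ⟨weightedBlowup F μ, fun N => ⟨_, isBlowupMap_weightedBlowup hμ N⟩, tendsto_id,
    tendsto_density_weightedBlowup hμ, fun _ h𝔥 => tendsto_distFam_weightedBlowup hμ h𝔥⟩

end TuranGT
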